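/- Let n ≥ 1, fix a type α = (α₁,…,αₙ) with index set I_α, exponents β_i and common value c, let p and q be the associated functionals, and let k > 0 and t₀ ∈ ℝ. Suppose (t_γ, x_γ) : [0,∞) → ℝ × ℝⁿ is C¹ with t_γ'(τ) = q(x_γ(τ))·(1 − p(x_γ(τ))^{2c})^k and p(x_γ(τ)) = 1 for all τ ≥ 0 (a trajectory of the extended desingularized system lying on the horizon). Suppose further (t, x) : [0,∞) → ℝ × ℝⁿ is C¹ with t'(τ) = q(x(τ))·(1 − p(x(τ))^{2c})^k, t(0) = t₀, p(x(τ)) < 1 for all τ ≥ 0, and |t(τ) − t_γ(τ)| + ‖x(τ) − x_γ(τ)‖ → 0 as τ → ∞. Then: (i) t_γ is constant, say t_γ ≡ t̄; (ii) ∫₀^∞ q(x(τ))·(1 − p(x(τ))^{2c})^k dτ = t̄ − t₀ < ∞. Hence the corresponding solution y(t) of the nonautonomous system y' = f(t,y) blows up at the finite time t_max = t̄. -/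

import Mathlib

open Real Set MeasureTheory Filter Topology

/-! On the horizon `p = 1` the time rate `q (1 - p^{2c})^k` vanishes because `k > 0`, so `t_γ`
is a constant `t̄`. Inside the unit ball `p < 1` the rate is nonnegative, and `t(τ) → t̄` since
`(t, x)` converges to `(t_γ, x_γ)`. A function with nonnegative derivative and a finite limit at
infinity has integrable derivative, with integral equal to the total increment `t̄ - t₀`. -/

/-- The quasi-parabolic functional `p(x) = (∑_{i ∈ Iα} x_i^{2βᵢ})^{1/(2c)}`. -/
noncomputable def pQH {n : ℕ} (Iα : Finset (Fin n)) (β : Fin n → ℕ) (c : ℕ)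
    (x : Fin n → ℝ) : ℝ :=
  (∑ i ∈ Iα, x i ^ (2 * β i)) ^ ((1 : ℝ) / (2 * (c : ℝ)))

/-- The functional `q(x) = 1 - ((2c-1)/(2c)) (1 - p(x)^{2c})`. -/
noncomputable def qQH {n : ℕ} (Iα : Finset (Fin n)) (β : Fin n → ℕ) (c : ℕ)
    (x : Fin n → ℝ) : ℝ :=
  1 - ((2 * (c : ℝ) - 1) / (2 * (c : ℝ))) * (1 - pQH Iα β c x ^ (2 * (c : ℝ)))

theorem eq_of_hasDerivWithinAt_Ici_zero {f : ℝ → ℝ} {a : ℝ}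
    (hf : ∀ x ∈ Ici a, HasDerivWithinAt f 0 (Ici a) x) : ∀ x ∈ Ici a, f x = f a :=
  fun x hx => constant_of_has_deriv_right_zero (b := x)
    (fun y hy => ((hf y hy.1).continuousWithinAt).mono Icc_subset_Ici_self)
    (fun y hy => (hf y hy.1).mono (Ici_subset_Ici.2 hy.1)) x ⟨hx, le_rfl⟩

theorem integrableOn_Ici_and_integral_eq_of_hasDerivWithinAt_of_nonneg {f f' : ℝ → ℝ} {a L : ℝ}
    (hderiv : ∀ x ∈ Ici a, HasDerivWithinAt f (f' x) (Ici a) x)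
    (hnonneg : ∀ x ∈ Ici a, 0 ≤ f' x) (hf : Tendsto f atTop (𝓝 L)) :
    IntegrableOn f' (Ici a) ∧ ∫ x in Ici a, f' x = L - f a := by
  have hcont : ContinuousWithinAt f (Ici a) a := (hderiv a self_mem_Ici).continuousWithinAt
  have hderivAt : ∀ x ∈ Ioi a, HasDerivAt f (f' x) x :=
    fun x hx => (hderiv x (mem_Ici.2 hx.out.le)).hasDerivAt (Ici_mem_nhds hx)
  have hnonneg' : ∀ x ∈ Ioi a, 0 ≤ f' x := fun x hx => hnonneg x (mem_Ici.2 hx.out.le)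
  rw [integrableOn_Ici_iff_integrableOn_Ioi, integral_Ici_eq_integral_Ioi]
  exact ⟨integrableOn_Ioi_deriv_of_nonneg hcont hderivAt hnonneg' hf,
    integral_Ioi_of_hasDerivAt_of_nonneg hcont hderivAt hnonneg' hf⟩

theorem tendsto_of_abs_sub_add_tendsto_zero {ι : Type*} {l : Filter ι} {u v w : ι → ℝ} {L : ℝ}
    (hw : ∀ i, 0 ≤ w i) (h : Tendsto (fun i => |u i - v i| + w i) l (𝓝 0))
    (hv : Tendsto v l (𝓝 L)) : Tendsto u l (𝓝 L) := by
  have hsub : Tendsto (fun i => u i - v i) l (𝓝 0) :=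
    (tendsto_zero_iff_abs_tendsto_zero _).2 <|
      squeeze_zero (fun _ => abs_nonneg _) (fun i => le_add_of_nonneg_right (hw i)) h
  simpa using hsub.add hv

section QuasiHomogeneous

variable {n : ℕ} (Iα : Finset (Fin n)) (β : Fin n → ℕ) (c : ℕ)

theorem pQH_nonneg (x : Fin n → ℝ) : 0 ≤ pQH Iα β c x :=
  rpow_nonneg (Finset.sum_nonneg fun i _ => (even_two_mul (β i)).pow_nonneg (x i)) _

theorem qQH_nonneg (hc : 0 < c) {x : Fin n → ℝ} (hx : pQH Iα β c x ≤ 1) :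
    0 ≤ qQH Iα β c x := by
  have h2c : (1 : ℝ) ≤ 2 * c := by
    have : (1 : ℝ) ≤ c := by exact_mod_cast hc
    linarith
  have hr0 : 0 ≤ (2 * (c : ℝ) - 1) / (2 * c) := div_nonneg (by linarith) (by linarith)
  have hr1 : (2 * (c : ℝ) - 1) / (2 * c) ≤ 1 := div_le_one_of_le₀ (by linarith) (by linarith)
  have hs0 : 0 ≤ pQH Iα β c x ^ (2 * (c : ℝ)) := rpow_nonneg (pQH_nonneg Iα β c x) _
  have hs1 : pQH Iα β c x ^ (2 * (c : ℝ)) ≤ 1 :=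
    rpow_le_one (pQH_nonneg Iα β c x) hx (by linarith)
  unfold qQH
  nlinarith

theorem timeRate_nonneg (hc : 0 < c) (k : ℝ) {x : Fin n → ℝ} (hx : pQH Iα β c x ≤ 1) :
    0 ≤ qQH Iα β c x * (1 - pQH Iα β c x ^ (2 * (c : ℝ))) ^ k :=
  mul_nonneg (qQH_nonneg Iα β c hc hx) <| rpow_nonneg
    (sub_nonneg.2 (rpow_le_one (pQH_nonneg Iα β c x) hx (by positivity))) k

theorem timeRate_eq_zero_of_pQH_eq_one {k : ℝ} (hk : 0 < k) {x : Fin n → ℝ}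
    (hx : pQH Iα β c x = 1) :
    qQH Iα β c x * (1 - pQH Iα β c x ^ (2 * (c : ℝ))) ^ k = 0 := by
  rw [hx, one_rpow, sub_self, zero_rpow hk.ne', mul_zero]

end QuasiHomogeneous

theorem nonautonomous_blowup_general
    {n : ℕ}
    (Iα : Finset (Fin n))
    (c : ℕ) (hc : 0 < c)
    (β : Fin n → ℕ)
    (k t₀ : ℝ) (hk : 0 < k)
    (tγ : ℝ → ℝ) (xγ : ℝ → Fin n → ℝ) (t : ℝ → ℝ) (x : ℝ → Fin n → ℝ)
    (htγ : ∀ τ ∈ Ici (0 : ℝ), HasDerivWithinAt tγ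
      (qQH Iα β c (xγ τ) * (1 - pQH Iα β c (xγ τ) ^ (2 * (c : ℝ))) ^ k) (Ici 0) τ)
    (hγhor : ∀ τ ∈ Ici (0 : ℝ), pQH Iα β c (xγ τ) = 1)
    (ht : ∀ τ ∈ Ici (0 : ℝ), HasDerivWithinAt t
      (qQH Iα β c (x τ) * (1 - pQH Iα β c (x τ) ^ (2 * (c : ℝ))) ^ k) (Ici 0) τ)
    (ht0 : t 0 = t₀)
    (hxin : ∀ τ ∈ Ici (0 : ℝ), pQH Iα β c (x τ) < 1)
    (hconv : Tendsto (fun τ => |t τ - tγ τ| + ‖x τ - xγ τ‖) atTop (𝓝 0)) :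
    ∃ tbar : ℝ,
      (∀ τ ∈ Ici (0 : ℝ), tγ τ = tbar) ∧
      IntegrableOn
        (fun τ => qQH Iα β c (x τ) * (1 - pQH Iα β c (x τ) ^ (2 * (c : ℝ))) ^ k)
        (Ici 0) ∧
      ∫ τ in Ici (0 : ℝ),
          qQH Iα β c (x τ) * (1 - pQH Iα β c (x τ) ^ (2 * (c : ℝ))) ^ k
        = tbar - t₀ := by
  have htγ_const : ∀ τ ∈ Ici (0 : ℝ), tγ τ = tγ 0 :=
    eq_of_hasDerivWithinAt_Ici_zero fun τ hτ => by
      simpa only [timeRate_eq_zero_of_pQH_eq_one Iα β c hk (hγhor τ hτ)] using htγ τ hτ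
  have ht_lim : Tendsto t atTop (𝓝 (tγ 0)) :=
    tendsto_of_abs_sub_add_tendsto_zero (fun _ => norm_nonneg _) hconv <|
      tendsto_const_nhds.congr' <| eventually_atTop.2 ⟨0, fun τ hτ => (htγ_const τ hτ).symm⟩
  refine ⟨tγ 0, htγ_const, ?_⟩
  rw [← ht0]
  exact integrableOn_Ici_and_integral_eq_of_hasDerivWithinAt_of_nonneg ht
    (fun τ hτ => timeRate_nonneg Iα β c hc k (hxin τ hτ).le) ht_lim

/-- Nonautonomous blow-up: if `(t_γ, x_γ)` is a trajectory of the
extended desingularized system lying on the horizon, and `(t, x)` is a trajectory with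
`p(x(τ)) < 1` that converges to `(t_γ, x_γ)` as `τ → ∞`, then `t_γ` is constant,
say `t_γ ≡ t̄`, and `∫₀^∞ q(x(τ)) (1 - p(x(τ))^{2c})^k dτ = t̄ - t₀ < ∞`; hence the
corresponding solution of the nonautonomous system blows up at the finite time `t̄`. -/
theorem nonautonomous_blowup
    {n : ℕ} (hn : 1 ≤ n)
    (α : Fin n → ℕ) (hα : ∃ i, α i ≠ 0)
    (Iα : Finset (Fin n)) (hIα : ∀ i, i ∈ Iα ↔ 0 < α i)
    (c : ℕ) (hc : 0 < c)
    (β : Fin n → ℕ) (hβpos : ∀ i ∈ Iα, 0 < β i)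
    (hβ : ∀ i ∈ Iα, α i * β i = c)
    (k t₀ : ℝ) (hk : 0 < k)
    (tγ : ℝ → ℝ) (xγ : ℝ → Fin n → ℝ) (t : ℝ → ℝ) (x : ℝ → Fin n → ℝ)
    (hxγc : ContinuousOn xγ (Ici 0))
    (htγ : ∀ τ ∈ Ici (0 : ℝ), HasDerivWithinAt tγ
      (qQH Iα β c (xγ τ) * (1 - pQH Iα β c (xγ τ) ^ (2 * (c : ℝ))) ^ k) (Ici 0) τ)
    (hγhor : ∀ τ ∈ Ici (0 : ℝ), pQH Iα β c (xγ τ) = 1)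
    (hxc : ContinuousOn x (Ici 0))
    (ht : ∀ τ ∈ Ici (0 : ℝ), HasDerivWithinAt t
      (qQH Iα β c (x τ) * (1 - pQH Iα β c (x τ) ^ (2 * (c : ℝ))) ^ k) (Ici 0) τ)
    (ht0 : t 0 = t₀)
    (hxin : ∀ τ ∈ Ici (0 : ℝ), pQH Iα β c (x τ) < 1)
    (hconv : Tendsto (fun τ => |t τ - tγ τ| + ‖x τ - xγ τ‖) atTop (𝓝 0)) :
    ∃ tbar : ℝ,
      (∀ τ ∈ Ici (0 : ℝ), tγ τ = tbar) ∧
      IntegrableOn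
        (fun τ => qQH Iα β c (x τ) * (1 - pQH Iα β c (x τ) ^ (2 * (c : ℝ))) ^ k)
        (Ici 0) ∧
      ∫ τ in Ici (0 : ℝ),
          qQH Iα β c (x τ) * (1 - pQH Iα β c (x τ) ^ (2 * (c : ℝ))) ^ k
        = tbar - t₀ :=
  nonautonomous_blowup_general Iα c hc β k t₀ hk tγ xγ t x htγ hγhor ht ht0 hxin hconv
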